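/- In the Foata normal form F₁F₂⋯F_k of a trace, k is the minimal number of parallel steps needed to execute all tasks: k equals the length of the longest chain in the dependency order, i.e., the longest sequence of occurrences each pair of consecutive ones being dependent and ordered in the word. -/

import Mathlib

/-!
Along a chain the depth strictly increases, so a chain has at most `max depth + 1` elements.
Conversely, a maximal predecessor `i` of `j` has `depth i + 1 = depth j`, so following maximal
predecessors backwards (by strong induction on the depth) yields a chain ending at `j` with
`depth j + 1` elements.
-/

section

open Finset

variable {ι : Type*} [Fintype ι] {R : ι → ι → Prop} [DecidableRel R]

/-- The recursion characterising `depth j` as the number of edges of a longest `R`-path ending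
at `j`. -/
def IsLongestPathDepth (R : ι → ι → Prop) [DecidableRel R] (depth : ι → ℕ) : Prop :=
  ∀ j, depth j = (univ.filter (R · j)).sup (depth · + 1)

namespace IsLongestPathDepth

variable {depth : ι → ℕ} (h : IsLongestPathDepth R depth)
include h

theorem add_one_le {i j : ι} (hij : R i j) : depth i + 1 ≤ depth j :=
  h j ▸ le_sup (f := (depth · + 1)) (mem_filter.mpr ⟨mem_univ i, hij⟩)

theorem exists_add_length_le {a : ι} {l : List ι} (hl : (a :: l).IsChain R) :
    ∃ b, depth a + l.length ≤ depth b := by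
  induction l generalizing a with
  | nil => exact ⟨a, le_rfl⟩
  | cons c l ih =>
    obtain ⟨hac, hl⟩ := List.isChain_cons_cons.mp hl
    obtain ⟨b, hb⟩ := ih hl
    exact ⟨b, by have := h.add_one_le hac; simp only [List.length_cons]; omega⟩

theorem length_le_sup {l : List ι} (hl : l.IsChain R) :
    l.length ≤ univ.sup (depth · + 1) := by
  cases l with
  | nil => exact Nat.zero_le _
  | cons a l =>
    obtain ⟨b, hb⟩ := h.exists_add_length_le hl
    calc (a :: l).length ≤ depth b + 1 := by simp only [List.length_cons]; omega
      _ ≤ univ.sup (depth · + 1) := le_sup (f := (depth · + 1)) (mem_univ b)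

theorem exists_isChain_getLast?_eq (j : ι) :
    ∃ l : List ι, l.IsChain R ∧ l.getLast? = some j ∧ l.length = depth j + 1 := by
  induction hd : depth j using Nat.strong_induction_on generalizing j with
  | _ n ih =>
    subst hd
    by_cases hpred : (univ.filter (R · j)).Nonempty
    · obtain ⟨i, hi, hsup⟩ := exists_mem_eq_sup _ hpred (depth · + 1)
      have hij : R i j := (mem_filter.mp hi).2
      have hdi : depth i + 1 = depth j := by rw [h j, hsup]
      obtain ⟨l, hl, hlast, hlen⟩ := ih (depth i) (by omega) i rfl
      refine ⟨l ++ [j], hl.append (List.isChain_singleton j) ?_, by simp, by simp [hlen, hdi]⟩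
      simpa [hlast] using hij
    · have hz : depth j = 0 := by
        rw [h j, not_nonempty_iff_eq_empty.mp hpred, sup_empty]
        rfl
      exact ⟨[j], List.isChain_singleton j, rfl, by simp [hz]⟩

theorem exists_isChain_length_eq_sup :
    ∃ l : List ι, l.IsChain R ∧ l.length = univ.sup (depth · + 1) := by
  cases isEmpty_or_nonempty ι
  · exact ⟨[], List.isChain_nil, by simp [univ_eq_empty]⟩
  · obtain ⟨j, -, hsup⟩ := exists_mem_eq_sup univ univ_nonempty (depth · + 1)
    obtain ⟨l, hl, -, hlen⟩ := h.exists_isChain_getLast?_eq j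
    exact ⟨l, hl, hlen.trans hsup.symm⟩

end IsLongestPathDepth

end

theorem stmt_19_general {α : Type*} (D : α → α → Prop) [DecidableRel D]
    (w : List α) (depth : Fin w.length → ℕ)
    (hdepth : ∀ j : Fin w.length,
      depth j =
        (Finset.univ.filter (fun i : Fin w.length => i < j ∧ D (w.get i) (w.get j))).sup
          (fun i => depth i + 1)) :
    -- the number `k` of Foata classes, i.e. `univ.sup (depth · + 1)`, is exactly the
    -- length of the longest chain of pairwise-consecutively dependent occurrences
    (∃ p : List (Fin w.length),
        p.Chain' (fun i j => i < j ∧ D (w.get i) (w.get j)) ∧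
          p.length = Finset.univ.sup (fun j : Fin w.length => depth j + 1)) ∧
      ∀ p : List (Fin w.length),
        p.Chain' (fun i j => i < j ∧ D (w.get i) (w.get j)) →
          p.length ≤ Finset.univ.sup (fun j : Fin w.length => depth j + 1) := by
  have h : IsLongestPathDepth (fun i j => i < j ∧ D (w.get i) (w.get j)) depth := hdepth
  exact ⟨h.exists_isChain_length_eq_sup, fun _ => h.length_le_sup⟩

theorem stmt_19 {α : Type*} [Fintype α] (D : α → α → Prop) [DecidableRel D]
    (hrefl : ∀ a, D a a) (hsymm : Symmetric D)
    (w : List α) (depth : Fin w.length → ℕ)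
    (hdepth : ∀ j : Fin w.length,
      depth j =
        (Finset.univ.filter (fun i : Fin w.length => i < j ∧ D (w.get i) (w.get j))).sup
          (fun i => depth i + 1)) :
    -- the number `k` of Foata classes, i.e. `univ.sup (depth · + 1)`, is exactly the
    -- length of the longest chain of pairwise-consecutively dependent occurrences
    (∃ p : List (Fin w.length),
        p.Chain' (fun i j => i < j ∧ D (w.get i) (w.get j)) ∧
          p.length = Finset.univ.sup (fun j : Fin w.length => depth j + 1)) ∧
      ∀ p : List (Fin w.length),
        p.Chain' (fun i j => i < j ∧ D (w.get i) (w.get j)) →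
          p.length ≤ Finset.univ.sup (fun j : Fin w.length => depth j + 1) :=
  stmt_19_general D w depth hdepth
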